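/- Let β₁, β₂, δ₁, δ₂ ≥ 0 with β₁+δ₁ > 0, β₂+δ₂ > 0, and α₁, α₂, γ₁, γ₂ > 0. Suppose |A_n| ≤ (2n+1)(n+1)/6 and |B_n| ≤ (2n−1)(n−1)/6 for all n ≥ 2. If 2W'''_{(α₁,β₁),(γ₁δ₁)}(1) + 9W''_{(α₁,β₁),(γ₁,δ₁)}(1) + 6(W'_{(α₁,β₁),(γ₁,δ₁)}(1) − 1) + 2W'''_{(α₂,β₂),(γ₂,δ₂)}(1) + 3W''_{(α₂,β₂),(γ₂,δ₂)}(1) ≤ 6, then for every complex ε with |ε| = 1, ∑_{n=2}^∞ n|t_n| ≤ 1, where t_n = Γ(α₁)Γ(γ₁)A_n /(Γ(α₁+(n−1)β₁)Γ(γ₁+(n−1)δ₁)) + ε Γ(α₂)Γ(γ₂)B_n /(Γ(α₂+(n−1)β₂)Γ(γ₂+(n−1)δ₂)). -/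

import Mathlib

/-- The normalized four-parameter Wright function
`W_{(a,b),(c,d)}(x) = x + ∑_{n=2}^∞ Γ(a)Γ(c) xⁿ / (Γ(a+(n-1)b)Γ(c+(n-1)d))`
(as a function of a real variable, evaluated along the real axis). -/
noncomputable def wrightW (a b c d : ℝ) : ℝ → ℝ := fun x =>
  x + ∑' n : ℕ, Real.Gamma a * Real.Gamma c /
    (Real.Gamma (a + ((n : ℝ) + 1) * b) * Real.Gamma (c + ((n : ℝ) + 1) * d)) * x ^ (n + 2)

/-!
Writing `c n` for the `n`-th coefficient of the Wright series, log-convexity of `Γ` gives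
`Γ (y + b) / Γ y ≥ (y - 1) ^ b`, so `c (n + 1) / c n → 0` and the series is entire. Its derivatives
at `1` may then be taken termwise: `W^{(k)}(1) = [k = 1] + ∑ c n (n + 2)^{(k)}` with falling
factorials `m^{(k)}`. By the triangle inequality, `m |t_m|` is at most
`(m (2m+1)(m+1) c_m + m (2m-1)(m-1) d_m) / 6`, and the identities
`m (2m+1)(m+1) = 2 m^{(3)} + 9 m^{(2)} + 6 m` and `m (2m-1)(m-1) = 2 m^{(3)} + 3 m^{(2)}` show that
these bounds sum to one sixth of the left-hand side of the hypothesis.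
-/

open Filter Set Topology FormalMultilinearSeries

section EntirePowerSeries

variable {q : ℕ → ℝ}

theorem summable_norm_mul_natCast_pow_mul_pow (hq : (ofScalars ℝ q).radius = ⊤) (k : ℕ) (R : ℝ) :
    Summable fun n => ‖q n‖ * (n : ℝ) ^ k * R ^ n := by
  have hgeom : Summable fun n => ‖q n‖ * ‖2 * R‖ ^ n := by
    simpa using (ofScalars ℝ q).summable_norm_mul_pow (r := ‖2 * R‖₊)
      (by rw [hq]; exact ENNReal.coe_lt_top)
  have hdecay : ∀ᶠ n : ℕ in atTop, (n : ℝ) ^ k / 2 ^ n ≤ 1 :=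
    (tendsto_pow_const_div_const_pow_of_one_lt k one_lt_two).eventually_le_const one_pos
  refine hgeom.of_norm_bounded_eventually_nat ?_
  filter_upwards [hdecay] with n hn
  calc ‖‖q n‖ * (n : ℝ) ^ k * R ^ n‖ = ‖q n‖ * ‖2 * R‖ ^ n * ((n : ℝ) ^ k / 2 ^ n) := by
        simp only [norm_mul, norm_pow, Real.norm_eq_abs, abs_abs, Nat.abs_cast, abs_two, mul_pow]
        field_simp
    _ ≤ ‖q n‖ * ‖2 * R‖ ^ n := mul_le_of_le_one_right (by positivity) hn

theorem norm_mul_descFactorial_mul_pow_le (c : ℝ) (n k : ℕ) {z R : ℝ} (hz : |z| ≤ R) (hR : 1 ≤ R) :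
    ‖c * (n.descFactorial k * z ^ (n - k))‖ ≤ ‖c‖ * (n : ℝ) ^ k * R ^ n := by
  rw [norm_mul, norm_mul, mul_assoc, norm_pow, Real.norm_natCast, Real.norm_eq_abs]
  gcongr
  · exact_mod_cast n.descFactorial_le_pow k
  · calc |z| ^ (n - k) ≤ R ^ (n - k) := by gcongr
      _ ≤ R ^ n := pow_le_pow_right₀ hR (n.sub_le k)

theorem iteratedDeriv_const_mul_pow (c : ℝ) (n k : ℕ) :
    iteratedDeriv k (fun z : ℝ => c * z ^ n) = fun z => c * (n.descFactorial k * z ^ (n - k)) := by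
  funext z
  rw [iteratedDeriv_const_mul_field, iteratedDeriv_pow]

theorem summable_mul_descFactorial_mul_pow (hq : (ofScalars ℝ q).radius = ⊤) (k : ℕ) (x : ℝ) :
    Summable fun n => q n * (n.descFactorial k * x ^ (n - k)) :=
  (summable_norm_mul_natCast_pow_mul_pow hq k (max |x| 1)).of_norm_bounded
    fun n => norm_mul_descFactorial_mul_pow_le _ n k (le_max_left _ _) (le_max_right _ _)

theorem hasSum_iteratedDeriv_tsum_mul_pow (hq : (ofScalars ℝ q).radius = ⊤) (k : ℕ) (x : ℝ) :
    HasSum (fun n => q n * (n.descFactorial k * x ^ (n - k)))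
      (iteratedDeriv k (fun z => ∑' n, q n * z ^ n) x) := by
  have hderiv : ∀ j n, iteratedDerivWithin j (fun z : ℝ => q n * z ^ n) univ =
      fun z => q n * (n.descFactorial j * z ^ (n - j)) := fun j n => by
    rw [iteratedDerivWithin_univ, iteratedDeriv_const_mul_pow]
  have hlocal : ∀ j, SummableLocallyUniformlyOn
      (fun n => iteratedDerivWithin j (fun z : ℝ => q n * z ^ n) univ) univ := fun j => by
    refine SummableLocallyUniformlyOn_of_locally_bounded isOpen_univ fun K _ hK => ?_
    obtain ⟨R, hR⟩ := hK.isBounded.subset_closedBall 0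
    refine ⟨_, summable_norm_mul_natCast_pow_mul_pow hq j (max R 1), fun n z hz => ?_⟩
    rw [hderiv]
    have hzR : |z| ≤ R := by simpa using hR hz
    exact norm_mul_descFactorial_mul_pow_le _ n j (hzR.trans (le_max_left _ _)) (le_max_right _ _)
  have h := iteratedDerivWithin_tsum k isOpen_univ (mem_univ x)
    (fun t _ => by simpa using summable_mul_descFactorial_mul_pow hq 0 t)
    (fun j _ _ => hlocal j) (fun n j r _ _ => by rw [hderiv]; fun_prop)
  simp only [iteratedDerivWithin_univ, iteratedDeriv_const_mul_pow] at h
  rw [h]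
  exact (summable_mul_descFactorial_mul_pow hq k x).hasSum

end EntirePowerSeries

namespace Real

theorem rpow_sub_one_le_Gamma_add_div_Gamma {y b : ℝ} (hy : 1 < y) (hb : 0 < b) :
    (y - 1) ^ b ≤ Gamma (y + b) / Gamma y := by
  have hGy : 0 < Gamma y := Gamma_pos_of_pos (by linarith)
  have hGyb : 0 < Gamma (y + b) := Gamma_pos_of_pos (by linarith)
  -- log Γ has secant slope `log (y - 1)` on `[y - 1, y]`, which bounds its slope on `[y, y + b]`
  have hslope := convexOn_log_Gamma.slope_mono_adjacent (x := y - 1) (y := y) (z := y + b)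
    (mem_Ioi.2 (by linarith)) (mem_Ioi.2 (by linarith)) (by linarith) (by linarith)
  have hstep : Gamma y = (y - 1) * Gamma (y - 1) := by
    simpa using Gamma_add_one (s := y - 1) (by linarith)
  have hlog : log (Gamma y) - log (Gamma (y - 1)) = log (y - 1) := by
    rw [hstep, log_mul (by linarith) (Gamma_pos_of_pos (by linarith)).ne']
    ring
  simp only [Function.comp, sub_sub_cancel, div_one, add_sub_cancel_left, hlog] at hslope
  rw [le_div_iff₀ hb] at hslope
  rw [← log_le_log_iff (by positivity) (by positivity), log_rpow (by linarith), log_div hGyb.ne' hGy.ne']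
  linarith

theorem tendsto_Gamma_div_Gamma_add {b : ℝ} (hb : 0 < b) :
    Tendsto (fun y => Gamma y / Gamma (y + b)) atTop (𝓝 0) := by
  have hpow : Tendsto (fun y : ℝ => (y - 1) ^ b) atTop atTop :=
    (tendsto_rpow_atTop hb).comp (tendsto_atTop_add_const_right _ (-1) tendsto_id)
  have hratio : Tendsto (fun y => Gamma (y + b) / Gamma y) atTop atTop :=
    tendsto_atTop_mono' _ ((eventually_gt_atTop 1).mono fun y hy =>
      rpow_sub_one_le_Gamma_add_div_Gamma hy hb) hpow
  simpa only [Pi.inv_def, inv_div] using hratio.inv_tendsto_atTop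

end Real

open Real

/-- The coefficient of `x ^ (n + 2)` in `wrightW a b c d`. -/
noncomputable def wrightCoeff (a b c d : ℝ) (n : ℕ) : ℝ :=
  Gamma a * Gamma c / (Gamma (a + ((n : ℝ) + 1) * b) * Gamma (c + ((n : ℝ) + 1) * d))

section WrightCoeff

variable {a b c d : ℝ}

theorem wrightCoeff_pos (ha : 0 < a) (hc : 0 < c) (hb : 0 ≤ b) (hd : 0 ≤ d) (n : ℕ) :
    0 < wrightCoeff a b c d n := by
  unfold wrightCoeff
  have := Gamma_pos_of_pos ha
  have := Gamma_pos_of_pos hc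
  have := Gamma_pos_of_pos (by positivity : 0 < a + ((n : ℝ) + 1) * b)
  have := Gamma_pos_of_pos (by positivity : 0 < c + ((n : ℝ) + 1) * d)
  positivity

theorem wrightCoeff_succ_div (ha : 0 < a) (hc : 0 < c) (hb : 0 ≤ b) (hd : 0 ≤ d) (n : ℕ) :
    wrightCoeff a b c d (n + 1) / wrightCoeff a b c d n =
      Gamma (a + (n + 1) * b) / Gamma (a + (n + 1) * b + b) *
        (Gamma (c + (n + 1) * d) / Gamma (c + (n + 1) * d + d)) := by
  have := Gamma_pos_of_pos ha
  have := Gamma_pos_of_pos hc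
  have := Gamma_pos_of_pos (by positivity : 0 < a + ((n : ℝ) + 1) * b)
  have := Gamma_pos_of_pos (by positivity : 0 < c + ((n : ℝ) + 1) * d)
  have := Gamma_pos_of_pos (by positivity : 0 < a + ((n : ℝ) + 1) * b + b)
  have := Gamma_pos_of_pos (by positivity : 0 < c + ((n : ℝ) + 1) * d + d)
  simp only [wrightCoeff, Nat.cast_add_one, add_mul (n + 1 : ℝ) 1, one_mul, ← add_assoc]
  field_simp

theorem tendsto_Gamma_step_div (a : ℝ) (hb : 0 < b) :
    Tendsto (fun n : ℕ => Gamma (a + (n + 1) * b) / Gamma (a + (n + 1) * b + b)) atTop (𝓝 0) :=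
  (tendsto_Gamma_div_Gamma_add hb).comp <| tendsto_atTop_add_const_left _ a <|
    (tendsto_atTop_add_const_right _ 1 tendsto_natCast_atTop_atTop).atTop_mul_const hb

theorem isBoundedUnder_norm_Gamma_step_div (ha : 0 < a) (hb : 0 ≤ b) :
    IsBoundedUnder (· ≤ ·) atTop
      (norm ∘ fun n : ℕ => Gamma (a + (n + 1) * b) / Gamma (a + (n + 1) * b + b)) := by
  rcases hb.eq_or_lt with rfl | hb
  · exact isBoundedUnder_of_eventually_le (a := 1) <| Eventually.of_forall fun n => by
      simp [(Gamma_pos_of_pos ha).ne']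
  · exact (tendsto_Gamma_step_div a hb).norm.isBoundedUnder_le

theorem tendsto_wrightCoeff_succ_div (ha : 0 < a) (hc : 0 < c) (hb : 0 ≤ b) (hd : 0 ≤ d)
    (hbd : 0 < b + d) :
    Tendsto (fun n => wrightCoeff a b c d (n + 1) / wrightCoeff a b c d n) atTop (𝓝 0) := by
  simp only [wrightCoeff_succ_div ha hc hb hd]
  rcases hb.eq_or_lt with rfl | hb'
  · exact isBoundedUnder_le_mul_tendsto_zero (isBoundedUnder_norm_Gamma_step_div ha le_rfl)
      (tendsto_Gamma_step_div c (by linarith))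
  · exact (tendsto_Gamma_step_div a hb').zero_mul_isBoundedUnder_le
      (isBoundedUnder_norm_Gamma_step_div hc hd)

noncomputable def wrightPowerCoeff (a b c d : ℝ) : ℕ → ℝ
  | 0 => 0
  | 1 => 1
  | n + 2 => wrightCoeff a b c d n

theorem radius_ofScalars_wrightPowerCoeff (ha : 0 < a) (hc : 0 < c) (hb : 0 ≤ b) (hd : 0 ≤ d)
    (hbd : 0 < b + d) :
    (ofScalars ℝ (wrightPowerCoeff a b c d)).radius = ⊤ := by
  refine ofScalars_radius_eq_top_of_tendsto _ _ ?_ ?_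
  · filter_upwards [eventually_ge_atTop 2] with n hn
    obtain ⟨m, rfl⟩ := Nat.exists_eq_add_of_le' hn
    exact (wrightCoeff_pos ha hc hb hd m).ne'
  · refine (tendsto_add_atTop_iff_nat 2).1 <|
      (tendsto_wrightCoeff_succ_div ha hc hb hd hbd).congr fun n => ?_
    simp [wrightPowerCoeff, abs_of_pos (wrightCoeff_pos ha hc hb hd _)]

theorem wrightW_eq_tsum (ha : 0 < a) (hc : 0 < c) (hb : 0 ≤ b) (hd : 0 ≤ d) (hbd : 0 < b + d) :
    wrightW a b c d = fun x => ∑' n, wrightPowerCoeff a b c d n * x ^ n := by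
  funext x
  have hsum := summable_mul_descFactorial_mul_pow
    (radius_ofScalars_wrightPowerCoeff ha hc hb hd hbd) 0 x
  simp only [Nat.descFactorial_zero, Nat.cast_one, one_mul, Nat.sub_zero] at hsum
  rw [← hsum.sum_add_tsum_nat_add 2]
  simp [wrightW, wrightCoeff, wrightPowerCoeff, Finset.sum_range_succ]

theorem hasSum_wrightCoeff_mul_descFactorial (ha : 0 < a) (hc : 0 < c) (hb : 0 ≤ b) (hd : 0 ≤ d)
    (hbd : 0 < b + d) (k : ℕ) :
    HasSum (fun n => wrightCoeff a b c d n * (n + 2).descFactorial k)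
      (iteratedDeriv k (wrightW a b c d) 1 - (1 : ℕ).descFactorial k) := by
  have h := hasSum_iteratedDeriv_tsum_mul_pow (radius_ofScalars_wrightPowerCoeff ha hc hb hd hbd) k 1
  rw [← wrightW_eq_tsum ha hc hb hd hbd] at h
  simpa [wrightPowerCoeff, Finset.sum_range_succ] using (hasSum_nat_add_iff' 2).2 h

end WrightCoeff

theorem tsum_le_of_le_of_hasSum {ι : Type*} {f g : ι → ℝ} {a : ℝ} (hf : ∀ i, 0 ≤ f i)
    (hfg : ∀ i, f i ≤ g i) (hg : HasSum g a) : ∑' i, f i ≤ a :=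
  hasSum_le hfg (hg.summable.of_nonneg_of_le hf hfg).hasSum hg

theorem cast_descFactorial_three (m : ℕ) : (m.descFactorial 3 : ℝ) = m * (m - 1) * (m - 2) := by
  rcases m with _ | _ | _ | m
  all_goals simp [Nat.descFactorial_succ]
  ring

theorem natCast_mul_norm_add_le {m : ℕ} {u v : ℝ} (hu : 0 ≤ u) (hv : 0 ≤ v) {A B ε : ℂ}
    (hε : ‖ε‖ = 1) (hA : ‖A‖ ≤ (2 * (m : ℝ) + 1) * ((m : ℝ) + 1) / 6)
    (hB : ‖B‖ ≤ (2 * (m : ℝ) - 1) * ((m : ℝ) - 1) / 6) :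
    m * ‖(u : ℂ) * A + ε * (v : ℂ) * B‖ ≤
      (u * (2 * m.descFactorial 3 + 9 * m.descFactorial 2 + 6 * m.descFactorial 1) +
        v * (2 * m.descFactorial 3 + 3 * m.descFactorial 2)) / 6 := by
  have hnorm : ‖(u : ℂ) * A + ε * (v : ℂ) * B‖ ≤ u * ‖A‖ + v * ‖B‖ := by
    refine (norm_add_le _ _).trans_eq ?_
    simp [hε, abs_of_nonneg hu, abs_of_nonneg hv]
  calc (m : ℝ) * ‖(u : ℂ) * A + ε * (v : ℂ) * B‖
      ≤ m * (u * ((2 * (m : ℝ) + 1) * ((m : ℝ) + 1) / 6) +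
          v * ((2 * (m : ℝ) - 1) * ((m : ℝ) - 1) / 6)) := by
        gcongr
        exact hnorm.trans (by gcongr)
    _ = _ := by
        rw [cast_descFactorial_three, Nat.cast_descFactorial_two, Nat.descFactorial_one]
        ring

/-- key estimate for close-to-convexity of L(f) when f ∈ C_H^o
(or S_H^o, T_H^o), i.e. |Aₙ| ≤ (2n+1)(n+1)/6 and |Bₙ| ≤ (2n−1)(n−1)/6. -/
theorem Lf_close_to_convex_to_close_to_convex_estimate (α₁ β₁ γ₁ δ₁ α₂ β₂ γ₂ δ₂ : ℝ) (A B : ℕ → ℂ)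
    (hβ₁ : 0 ≤ β₁) (hδ₁ : 0 ≤ δ₁) (hβδ₁ : 0 < β₁ + δ₁)
    (hβ₂ : 0 ≤ β₂) (hδ₂ : 0 ≤ δ₂) (hβδ₂ : 0 < β₂ + δ₂)
    (hα₁ : 0 < α₁) (hγ₁ : 0 < γ₁) (hα₂ : 0 < α₂) (hγ₂ : 0 < γ₂)
    (hA : ∀ n : ℕ, 2 ≤ n → ‖A n‖ ≤ (2 * (n : ℝ) + 1) * ((n : ℝ) + 1) / 6)
    (hB : ∀ n : ℕ, 2 ≤ n → ‖B n‖ ≤ (2 * (n : ℝ) - 1) * ((n : ℝ) - 1) / 6)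
    (hyp : 2 * iteratedDeriv 3 (wrightW α₁ β₁ γ₁ δ₁) 1
        + 9 * iteratedDeriv 2 (wrightW α₁ β₁ γ₁ δ₁) 1
        + 6 * (deriv (wrightW α₁ β₁ γ₁ δ₁) 1 - 1)
        + 2 * iteratedDeriv 3 (wrightW α₂ β₂ γ₂ δ₂) 1
        + 3 * iteratedDeriv 2 (wrightW α₂ β₂ γ₂ δ₂) 1 ≤ 6) :
    ∀ ε : ℂ, ‖ε‖ = 1 →
      ∑' n : ℕ, ((n : ℝ) + 2) *
        ‖((Real.Gamma α₁ * Real.Gamma γ₁ /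
            (Real.Gamma (α₁ + ((n : ℝ) + 1) * β₁) * Real.Gamma (γ₁ + ((n : ℝ) + 1) * δ₁)) : ℝ) : ℂ) * A (n + 2)
          + ε * ((Real.Gamma α₂ * Real.Gamma γ₂ /
            (Real.Gamma (α₂ + ((n : ℝ) + 1) * β₂) * Real.Gamma (γ₂ + ((n : ℝ) + 1) * δ₂)) : ℝ) : ℂ) * B (n + 2)‖ ≤ 1 := by
  intro ε hε
  have hW₁ := hasSum_wrightCoeff_mul_descFactorial hα₁ hγ₁ hβ₁ hδ₁ hβδ₁
  have hW₂ := hasSum_wrightCoeff_mul_descFactorial hα₂ hγ₂ hβ₂ hδ₂ hβδ₂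
  have hmajorant := (((((hW₁ 3).mul_left 2).add ((hW₁ 2).mul_left 9)).add
    ((hW₁ 1).mul_left 6)).add (((hW₂ 3).mul_left 2).add ((hW₂ 2).mul_left 3))).div_const 6
  refine (tsum_le_of_le_of_hasSum (fun n => by positivity) (fun n => ?_) hmajorant).trans ?_
  · have h := natCast_mul_norm_add_le (m := n + 2) (wrightCoeff_pos hα₁ hγ₁ hβ₁ hδ₁ n).le
      (wrightCoeff_pos hα₂ hγ₂ hβ₂ hδ₂ n).le hε (hA (n + 2) (by omega)) (hB (n + 2) (by omega))
    push_cast at h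
    exact h.trans_eq (by ring)
  · simp only [iteratedDeriv_one, Nat.descFactorial_self, Nat.descFactorial_of_lt, Nat.one_lt_ofNat,
      Nat.factorial_one, Nat.cast_one, Nat.cast_zero, sub_zero]
    linarith
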